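/- arXiv:1203.6262 — 2 statements merged into one kernel-verified Lean document; each statement's English description precedes it below -/
import Mathlib

section
/- Let A ∈ M₃⊗M₃ be separable. Then A is an interior point of the convex set V₁ ∩ T[A] if and only if for every nonzero z ∈ Q[A] there exist a scalar λ > 0 and finitely many product vectors z_ι ∈ Q[A] such that A = λ zz* + ∑_ι z_ι z_ι*. -/
open Matrix BigOperators
open scoped ComplexOrder

/-- Index set for `M₃ ⊗ M₃ ≅ M₉`: pairs `(i,k)` with `i,k ∈ Fin 3`. -/
abbrev Idx : Type := Fin 3 × Fin 3

/-- `M₃ ⊗ M₃`, identified with 9×9 complex matrices. -/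
abbrev M9 : Type := Matrix Idx Idx ℂ

/-- Vectors in `ℂ³ ⊗ ℂ³ ≅ ℂ⁹`. -/
abbrev V9 : Type := Idx → ℂ

/-- The product vector `x ⊗ y`, with entries `(x⊗y)(i,k) = x i * y k`. -/
def prodVec (x y : Fin 3 → ℂ) : V9 := fun p => x p.1 * y p.2

/-- Entrywise complex conjugate of a vector in `ℂ³`. -/
def conjVec (x : Fin 3 → ℂ) : Fin 3 → ℂ := fun i => (starRingEnd ℂ) (x i)

/-- The rank-one matrix `z z*`. -/
def rankOne (z : V9) : M9 := Matrix.vecMulVec z (fun p => (starRingEnd ℂ) (z p))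

/-- The partial transpose: `A^Γ((i,k),(j,l)) = A((j,k),(i,l))`. -/
def ptrans (A : M9) : M9 := fun p q => A (q.1, p.2) (p.1, q.2)

/-- The range of a matrix `A`, as a subspace of `ℂ⁹`. -/
noncomputable def MatRange (A : M9) : Submodule ℂ V9 := LinearMap.range A.mulVecLin

/-- `A` is separable: a finite sum of `(x⊗y)(x⊗y)*` over product vectors. -/
def IsSep (A : M9) : Prop :=
  ∃ (n : ℕ) (x y : Fin n → Fin 3 → ℂ),
    A = ∑ ι : Fin n, rankOne (prodVec (x ι) (y ι))

/-- The convex cone `V₁` of all separable matrices. -/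
def V1 : Set M9 := {A | IsSep A}

/-- `A` is PPT: both `A` and `A^Γ` are positive semidefinite. -/
def IsPPT (A : M9) : Prop := A.PosSemidef ∧ (ptrans A).PosSemidef

/-- The convex cone `𝕋` of all PPT matrices. -/
def Tcone : Set M9 := {A | IsPPT A}

/-- `F` is a face of the convex set `C`. -/
def IsFaceOf (F C : Set M9) : Prop :=
  F ⊆ C ∧ Convex ℝ F ∧
    ∀ x ∈ C, ∀ y ∈ C, ∀ t : ℝ, 0 < t → t < 1 →
      (1 - t) • x + t • y ∈ F → x ∈ F ∧ y ∈ F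

/-- The smallest face of `C` containing `A`. -/
def smallestFace (C : Set M9) (A : M9) : Set M9 := ⋂₀ {F | IsFaceOf F C ∧ A ∈ F}

/-- `P[A]`: product vectors `z` with `z z* ∈ V₁[A]`. -/
def Pvecs (A : M9) : Set V9 :=
  {z | (∃ x y : Fin 3 → ℂ, z = prodVec x y) ∧ rankOne z ∈ smallestFace V1 A}

/-- `Q[A]`: product vectors `x⊗y` with `x⊗y ∈ range A` and `x̄⊗y ∈ range A^Γ`. -/
def Qvecs (A : M9) : Set V9 :=
  {z | ∃ x y : Fin 3 → ℂ, z = prodVec x y ∧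
    prodVec x y ∈ MatRange A ∧ prodVec (conjVec x) y ∈ MatRange (ptrans A)}

/-- The face `𝕋[A]` of the PPT cone determined by `A`. -/
def TFace (A : M9) : Set M9 :=
  {B | IsPPT B ∧ MatRange B ≤ MatRange A ∧ MatRange (ptrans B) ≤ MatRange (ptrans A)}

/-- `x` is an interior point of the convex set `C`. -/
def IsInteriorPt (x : M9) (C : Set M9) : Prop :=
  x ∈ C ∧ ∀ y ∈ C, ∃ t : ℝ, 1 < t ∧ (1 - t) • y + t • x ∈ C

/-- The matrix `A[a,b,c]` of the paper. -/
def Amat (a b c : ℝ) : M9 := fun p q =>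
  if p = q then
    (if p.1 = p.2 then (a : ℂ) else if p.2 = p.1 + 1 then (c : ℂ) else (b : ℂ))
  else if p.1 = p.2 ∧ q.1 = q.2 then 1 else 0

/-! The set V₁ ∩ 𝕋[A] is the convex cone of sums of `z z*` with `z ∈ Q[A]`: the range of
`∑ wᵢ wᵢ*` is the span of the `wᵢ`, and partial transposition turns `(x⊗y)(x⊗y)*` into
`(x̄⊗y)(x̄⊗y)*`. A point `a` of a convex cone `K` is interior iff for every `b ∈ K` some
`a - ε b` stays in `K`; since `a - ε b, a - δ c ∈ K` give `a - (εδ/(ε+δ)) (b + c) ∈ K`, it is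
enough to test this on the generators `z z*`, which is the condition on the right. -/

namespace ConvexCone

variable {E : Type*} [AddCommGroup E] [Module ℝ E] {K : ConvexCone ℝ E} {a : E}

lemma sub_smul_add_mem {b c : E} {ε δ : ℝ} (hε : 0 < ε) (hδ : 0 < δ)
    (hb : a - ε • b ∈ K) (hc : a - δ • c ∈ K) : a - (ε * δ / (ε + δ)) • (b + c) ∈ K := by
  have hεδ : 0 < ε + δ := add_pos hε hδ
  convert K.add_mem (K.smul_mem (div_pos hδ hεδ) hb) (K.smul_mem (div_pos hε hεδ) hc) using 1
  match_scalars <;> field_simp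
  ring

lemma exists_sub_smul_sum_mem (ha : a ∈ K) {ι : Type*} (s : Finset ι) (g : ι → E)
    (hg : ∀ i ∈ s, ∃ ε : ℝ, 0 < ε ∧ a - ε • g i ∈ K) :
    ∃ ε : ℝ, 0 < ε ∧ a - ε • ∑ i ∈ s, g i ∈ K := by
  refine Finset.sum_induction g (fun b => ∃ ε : ℝ, 0 < ε ∧ a - ε • b ∈ K) ?_ ⟨1, one_pos, ?_⟩ hg
  · rintro b c ⟨ε, hε, hb⟩ ⟨δ, hδ, hc⟩
    exact ⟨_, by positivity, sub_smul_add_mem hε hδ hb hc⟩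
  · simpa using ha

lemma exists_one_lt_smul_add_mem_iff (ha : a ∈ K) (b : E) :
    (∃ t : ℝ, 1 < t ∧ (1 - t) • b + t • a ∈ K) ↔ ∃ ε : ℝ, 0 < ε ∧ a - ε • b ∈ K := by
  constructor
  · rintro ⟨t, ht, hmem⟩
    have ht0 : 0 < t := by linarith
    refine ⟨(t - 1) / t, div_pos (by linarith) ht0, ?_⟩
    convert K.smul_mem (inv_pos.mpr ht0) hmem using 1
    match_scalars <;> field_simp
    ring
  · rintro ⟨ε, hε, hmem⟩
    refine ⟨1 + ε, by linarith, ?_⟩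
    convert K.add_mem hmem (K.smul_mem hε ha) using 1
    module

end ConvexCone

lemma isInteriorPt_iff {A : M9} {K : ConvexCone ℝ M9} (hA : A ∈ K) :
    IsInteriorPt A K ↔ ∀ B ∈ K, ∃ ε : ℝ, 0 < ε ∧ A - ε • B ∈ K := by
  simp only [IsInteriorPt, SetLike.mem_coe, hA, true_and]
  exact forall₂_congr fun B _ => ConvexCone.exists_one_lt_smul_add_mem_iff hA B

namespace Matrix

lemma sum_vecMulVec_star_eq_mul_conjTranspose {m ι R : Type*} [Fintype ι]
    [NonUnitalNonAssocSemiring R] [StarRing R] (w : ι → m → R) :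
    ∑ i, vecMulVec (w i) (star (w i)) = (of w)ᵀ * (of w)ᵀᴴ := by
  ext p q
  simp [sum_apply, vecMulVec_apply, mul_apply]

variable {m ι 𝕜 : Type*} [Fintype m] [Fintype ι] [RCLike 𝕜]

lemma range_mulVecLin_mul_conjTranspose (W : Matrix m ι 𝕜) :
    LinearMap.range (W * Wᴴ).mulVecLin = LinearMap.range W.mulVecLin :=
  Submodule.eq_of_le_of_finrank_eq
    (mulVecLin_mul W Wᴴ ▸ LinearMap.range_comp_le_range _ _) (rank_self_mul_conjTranspose W)

lemma range_mulVecLin_sum_vecMulVec_star (w : ι → m → 𝕜) :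
    LinearMap.range (∑ i, vecMulVec (w i) (star (w i))).mulVecLin =
      Submodule.span 𝕜 (Set.range w) := by
  rw [sum_vecMulVec_star_eq_mul_conjTranspose, range_mulVecLin_mul_conjTranspose,
    range_mulVecLin, col_transpose]
  rfl

lemma posSemidef_sum_vecMulVec_star (w : ι → m → 𝕜) :
    (∑ i, vecMulVec (w i) (star (w i))).PosSemidef := by
  rw [sum_vecMulVec_star_eq_mul_conjTranspose]
  exact posSemidef_self_mul_conjTranspose _

end Matrix

lemma matRange_sum_rankOne {ι : Type*} [Fintype ι] (w : ι → V9) :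
    MatRange (∑ i, rankOne (w i)) = Submodule.span ℂ (Set.range w) :=
  range_mulVecLin_sum_vecMulVec_star w

lemma posSemidef_sum_rankOne {ι : Type*} [Fintype ι] (w : ι → V9) :
    (∑ i, rankOne (w i)).PosSemidef :=
  posSemidef_sum_vecMulVec_star w

lemma ptrans_sum_rankOne_prodVec {ι : Type*} [Fintype ι] (x y : ι → Fin 3 → ℂ) :
    ptrans (∑ i, rankOne (prodVec (x i) (y i))) =
      ∑ i, rankOne (prodVec (conjVec (x i)) (y i)) := by
  ext p q
  simp only [ptrans, Matrix.sum_apply, rankOne, vecMulVec_apply, prodVec, conjVec, map_mul,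
    Complex.conj_conj]
  exact Finset.sum_congr rfl fun _ _ => by ring

lemma isPPT_of_isSep {A : M9} (hA : IsSep A) : IsPPT A := by
  obtain ⟨n, x, y, rfl⟩ := hA
  refine ⟨posSemidef_sum_rankOne _, ?_⟩
  rw [ptrans_sum_rankOne_prodVec]
  exact posSemidef_sum_rankOne _

lemma self_mem_V1_inter_TFace {A : M9} (hA : IsSep A) : A ∈ V1 ∩ TFace A :=
  ⟨hA, isPPT_of_isSep hA, le_rfl, le_rfl⟩

lemma rankOne_zero : rankOne 0 = 0 := by
  ext
  simp [rankOne]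

lemma rankOne_ofReal_smul (r : ℝ) (z : V9) :
    rankOne ((r : ℂ) • z) = (r * r) • rankOne z := by
  ext p q
  simp only [rankOne, vecMulVec_apply, Pi.smul_apply, smul_eq_mul, map_mul, Complex.conj_ofReal,
    Matrix.smul_apply, Complex.real_smul, Complex.ofReal_mul]
  ring

lemma prodVec_smul_left (c : ℂ) (x y : Fin 3 → ℂ) :
    prodVec (c • x) y = c • prodVec x y := by
  ext p
  simp [prodVec, mul_assoc]

lemma conjVec_smul (c : ℂ) (x : Fin 3 → ℂ) :
    conjVec (c • x) = starRingEnd ℂ c • conjVec x := by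
  ext i
  simp [conjVec]

lemma smul_mem_Qvecs {A : M9} {z : V9} (c : ℂ) (hz : z ∈ Qvecs A) : c • z ∈ Qvecs A := by
  obtain ⟨x, y, rfl, hxy, hxy'⟩ := hz
  refine ⟨c • x, y, (prodVec_smul_left c x y).symm, ?_, ?_⟩
  · rw [prodVec_smul_left]
    exact Submodule.smul_mem _ _ hxy
  · rw [conjVec_smul, prodVec_smul_left]
    exact Submodule.smul_mem _ _ hxy'

def qCone (A : M9) : ConvexCone ℝ M9 where
  carrier := {M | ∃ (n : ℕ) (zs : Fin n → V9), (∀ ι, zs ι ∈ Qvecs A) ∧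
    M = ∑ ι, rankOne (zs ι)}
  smul_mem' := by
    rintro c hc _ ⟨n, zs, hzs, rfl⟩
    refine ⟨n, fun ι => (√c : ℂ) • zs ι, fun ι => smul_mem_Qvecs _ (hzs ι), ?_⟩
    simp only [rankOne_ofReal_smul, Real.mul_self_sqrt hc.le, Finset.smul_sum]
  add_mem' := by
    rintro _ ⟨m, zs, hzs, rfl⟩ _ ⟨n, ws, hws, rfl⟩
    refine ⟨m + n, Fin.append zs ws, Fin.addCases (by simpa using hzs) (by simpa using hws), ?_⟩
    simp [Fin.sum_univ_add]

lemma rankOne_mem_qCone {A : M9} {z : V9} (hz : z ∈ Qvecs A) : rankOne z ∈ qCone A :=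
  ⟨1, fun _ => z, fun _ => hz, by simp⟩

lemma coe_qCone (A : M9) : (qCone A : Set M9) = V1 ∩ TFace A := by
  ext M
  constructor
  · rintro ⟨n, zs, hzs, rfl⟩
    choose x y hxy hmem hmem' using hzs
    obtain rfl : zs = fun ι => prodVec (x ι) (y ι) := funext hxy
    have hsep : IsSep (∑ ι, rankOne (prodVec (x ι) (y ι))) := ⟨n, x, y, rfl⟩
    refine ⟨hsep, isPPT_of_isSep hsep, ?_, ?_⟩
    · rw [matRange_sum_rankOne, Submodule.span_le]
      exact Set.range_subset_iff.mpr hmem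
    · rw [ptrans_sum_rankOne_prodVec, matRange_sum_rankOne, Submodule.span_le]
      exact Set.range_subset_iff.mpr hmem'
  · rintro ⟨⟨n, x, y, rfl⟩, -, hran, hran'⟩
    refine ⟨n, fun ι => prodVec (x ι) (y ι), fun ι => ⟨x ι, y ι, rfl, ?_, ?_⟩, rfl⟩
    · apply hran
      rw [matRange_sum_rankOne]
      exact Submodule.subset_span ⟨ι, rfl⟩
    · apply hran'
      rw [ptrans_sum_rankOne_prodVec, matRange_sum_rankOne]
      exact Submodule.subset_span ⟨ι, rfl⟩

lemma sub_smul_rankOne_mem_qCone_iff (A : M9) (z : V9) (l : ℝ) :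
    A - l • rankOne z ∈ qCone A ↔
      ∃ (n : ℕ) (zs : Fin n → V9), (∀ ι, zs ι ∈ Qvecs A) ∧
        A = (l : ℂ) • rankOne z + ∑ ι : Fin n, rankOne (zs ι) := by
  simp only [qCone, ConvexCone.mem_mk, Set.mem_ofPred_eq, sub_eq_iff_eq_add', Complex.coe_smul]

/-- For separable `A`, `A` is an interior point of `V₁ ∩ 𝕋[A]` iff
every nonzero `z ∈ Q[A]` appears (with a positive weight) in a decomposition of `A`
into rank-one projections onto vectors of `Q[A]`. -/
theorem stmt4 (A : M9) (hA : IsSep A) :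
    IsInteriorPt A (V1 ∩ TFace A) ↔
      ∀ z ∈ Qvecs A, z ≠ 0 →
        ∃ l : ℝ, 0 < l ∧ ∃ (n : ℕ) (zs : Fin n → V9),
          (∀ ι, zs ι ∈ Qvecs A) ∧
          A = (l : ℂ) • rankOne z + ∑ ι : Fin n, rankOne (zs ι) := by
  have hAK : A ∈ qCone A := by
    rw [← SetLike.mem_coe, coe_qCone]
    exact self_mem_V1_inter_TFace hA
  rw [← coe_qCone, isInteriorPt_iff hAK]
  constructor
  · intro hint z hz _
    obtain ⟨l, hl, hmem⟩ := hint _ (rankOne_mem_qCone hz)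
    exact ⟨l, hl, (sub_smul_rankOne_mem_qCone_iff A z l).mp hmem⟩
  · rintro hQ _ ⟨n, w, hw, rfl⟩
    refine ConvexCone.exists_sub_smul_sum_mem hAK _ _ fun ι _ => ?_
    by_cases h0 : w ι = 0
    · exact ⟨1, one_pos, by simpa [h0, rankOne_zero] using hAK⟩
    · obtain ⟨l, hl, hdec⟩ := hQ (w ι) (hw ι) h0
      exact ⟨l, hl, (sub_smul_rankOne_mem_qCone_iff A (w ι) l).mpr hdec⟩
end

section
/- For all reals b > 1 and c > 1, the smallest face of the cone V₁ containing A[1, b, c] satisfies V₁[A[1, b, c]] = V₁ ∩ T[A[1, b, c]]. -/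
open Matrix BigOperators
open scoped ComplexOrder

/-!
`V₁ ∩ 𝕋[A]` is a face of `V₁` because `𝕋[A]` is a face of the PPT cone (ranges of positive
semidefinite matrices grow under addition) and `V₁` consists of PPT matrices; hence it contains
`V₁[A]`. Conversely, a separable `B` with `range B ⊆ range A` is a sum of rank-one terms
`(x⊗y)(x⊗y)*` with `x⊗y ∈ range A`, and every vector in the range of `A = A[1,b,c]` has equal
entries at the positions `(i,i)`, so `x i * y i = δ` for all `i`. Averaging `(x⊗y)(x⊗y)*` over
the product vectors `Dx ⊗ D̄y`, `D = diag(1, ω, ω')` with `ω, ω'` fourth roots of unity, kills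
every off-diagonal entry except those between positions `(i,i)` and `(j,j)`, which all equal
`|δ|²`. The average is therefore `|δ|² A[1,1,1]` plus a diagonal matrix, and since `b, c > 1`
leave slack on the diagonal of `A`, the matrix `A - ε (x⊗y)(x⊗y)*` is separable for small
`ε > 0`. Summing, `A - s B ∈ V₁` for some `s > 0`, and any face of `V₁` containing `A` then
contains `B`.
-/

section Faces

variable {C : PointedCone ℝ M9} {F : Set M9}

theorem IsFaceOf.mem_of_smul_mem (hF : IsFaceOf F C) {x : M9} (hx : x ∈ C) {t : ℝ} (ht : 0 < t)
    (htx : t • x ∈ F) : x ∈ F := by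
  -- `t • x` is the point of the segment `[x, t ^ 2 • x]` with weight `1 / (1 + t)` on `t ^ 2 • x`
  have hu : 1 / (1 + t) < 1 := (div_lt_one (by linarith)).2 (by linarith)
  refine (hF.2.2 x hx (t ^ 2 • x) (C.smul_mem (sq_nonneg t) hx) _ (by positivity) hu ?_).1
  convert htx using 1
  rw [smul_smul, ← add_smul]
  congr 1
  field_simp
  ring

theorem IsFaceOf.mem_of_sub_smul_mem (hF : IsFaceOf F C) {A B : M9} (hA : A ∈ F) (hB : B ∈ C)
    {s : ℝ} (hs : 0 < s) (hAB : A - s • B ∈ C) : B ∈ F := by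
  have hmid : (1 - 1 / 2 : ℝ) • ((2 : ℝ) • (A - s • B)) + (1 / 2 : ℝ) • ((2 * s) • B) = A := by
    module
  have h2sB := (hF.2.2 _ (C.smul_mem zero_le_two hAB) _ (C.smul_mem (by positivity) hB) (1 / 2)
    (by norm_num) (by norm_num) (hmid ▸ hA)).2
  exact hF.mem_of_smul_mem hB (by positivity) h2sB

end Faces

theorem IsFaceOf.inter_of_subset {F C D : Set M9} (hF : IsFaceOf F C) (hD : Convex ℝ D)
    (hDC : D ⊆ C) : IsFaceOf (D ∩ F) D :=
  ⟨Set.inter_subset_left, hD.inter hF.2.1, fun x hx y hy t ht0 ht1 hxy =>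
    have h := hF.2.2 x (hDC hx) y (hDC hy) t ht0 ht1 hxy.2
    ⟨⟨hx, h.1⟩, ⟨hy, h.2⟩⟩⟩

theorem smallestFace_subset {F C : Set M9} {A : M9} (hF : IsFaceOf F C) (hA : A ∈ F) :
    smallestFace C A ⊆ F :=
  Set.sInter_subset_of_mem ⟨hF, hA⟩

theorem PointedCone.exists_sub_smul_sum_mem {E ι : Type*} [AddCommGroup E] [Module ℝ E]
    (C : PointedCone ℝ E) {A : E} (hA : A ∈ C) (s : Finset ι) (X : ι → E)
    (hX : ∀ i ∈ s, ∃ ε > (0 : ℝ), A - ε • X i ∈ C) : ∃ ε > (0 : ℝ), A - ε • ∑ i ∈ s, X i ∈ C := by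
  classical
  induction s using Finset.induction_on with
  | empty => exact ⟨1, one_pos, by simpa using hA⟩
  | insert i s hi ih =>
    obtain ⟨ε, hε, hεX⟩ := hX i (Finset.mem_insert_self i s)
    obtain ⟨δ, hδ, hδX⟩ := ih fun j hj => hX j (Finset.mem_insert_of_mem hj)
    have hεδ : 0 < ε + δ := add_pos hε hδ
    refine ⟨ε * δ / (ε + δ), div_pos (mul_pos hε hδ) hεδ, ?_⟩
    have hcomb : A - (ε * δ / (ε + δ)) • ∑ j ∈ insert i s, X j
        = (δ / (ε + δ)) • (A - ε • X i) + (ε / (ε + δ)) • (A - δ • ∑ j ∈ s, X j) := by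
      rw [Finset.sum_insert hi]
      match_scalars <;> field_simp
      ring
    rw [hcomb]
    exact add_mem (C.smul_mem (div_pos hδ hεδ).le hεX) (C.smul_mem (div_pos hε hεδ).le hδX)

namespace Matrix

variable {n 𝕜 : Type*} [Fintype n] [RCLike 𝕜]

theorem range_mulVecLin_smul_add_smul_le {M N : Matrix n n 𝕜} {W : Submodule 𝕜 (n → 𝕜)}
    (hM : LinearMap.range M.mulVecLin ≤ W) (hN : LinearMap.range N.mulVecLin ≤ W) (a b : ℝ) :
    LinearMap.range (a • M + b • N).mulVecLin ≤ W := by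
  rintro _ ⟨v, rfl⟩
  simp only [mulVecLin_apply, add_mulVec, smul_mulVec]
  exact W.add_mem (W.smul_of_tower_mem a (hM ⟨v, rfl⟩)) (W.smul_of_tower_mem b (hN ⟨v, rfl⟩))

theorem range_mulVecLin_le_smul {M : Matrix n n 𝕜} {a : ℝ} (ha : a ≠ 0) :
    LinearMap.range M.mulVecLin ≤ LinearMap.range (a • M).mulVecLin := by
  rintro _ ⟨v, rfl⟩
  exact ⟨a⁻¹ • v, by simp [smul_smul, ha]⟩

open scoped MatrixOrder in
theorem PosSemidef.range_mulVecLin_le_add [DecidableEq n] {M N : Matrix n n 𝕜} (hM : M.PosSemidef)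
    (hN : N.PosSemidef) : LinearMap.range M.mulVecLin ≤ LinearMap.range (M + N).mulVecLin := by
  obtain ⟨B, rfl⟩ := CStarAlgebra.nonneg_iff_eq_star_mul_self.mp hM.nonneg
  obtain ⟨C, rfl⟩ := CStarAlgebra.nonneg_iff_eq_star_mul_self.mp hN.nonneg
  simp only [star_eq_conjTranspose]
  -- stacking `B` over `C` gives `D` with `Dᴴ D = Bᴴ B + Cᴴ C`, and `Dᴴ D` has the range of `Dᴴ`
  set D : Matrix (n ⊕ n) n 𝕜 := fromRows B C
  have hDD : Dᴴ * D = Bᴴ * B + Cᴴ * C := by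
    rw [conjTranspose_fromRows_eq_fromCols_conjTranspose, fromCols_mul_fromRows]
  have hrange : LinearMap.range (Dᴴ * D).mulVecLin = LinearMap.range Dᴴ.mulVecLin := by
    refine Submodule.eq_of_le_of_finrank_le ?_ ?_
    · rw [mulVecLin_mul]
      exact LinearMap.range_comp_le_range _ _
    · change Dᴴ.rank ≤ (Dᴴ * D).rank
      rw [rank_conjTranspose_mul_self, rank_conjTranspose]
  rw [← hDD, hrange, mulVecLin_mul]
  refine (LinearMap.range_comp_le_range _ _).trans ?_
  rintro _ ⟨u, rfl⟩
  refine ⟨Sum.elim u 0, ?_⟩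
  simp [D, conjTranspose_fromRows_eq_fromCols_conjTranspose]

theorem PosSemidef.range_mulVecLin_le_smul_add [DecidableEq n] {M N : Matrix n n 𝕜}
    (hM : M.PosSemidef) (hN : N.PosSemidef) {a b : ℝ} (ha : 0 < a) (hb : 0 ≤ b) :
    LinearMap.range M.mulVecLin ≤ LinearMap.range (a • M + b • N).mulVecLin :=
  (range_mulVecLin_le_smul ha.ne').trans
    ((hM.smul ha.le).range_mulVecLin_le_add (hN.smul hb))

theorem range_mulVecLin_le_sum [DecidableEq n] {ι : Type*} {s : Finset ι} {M : ι → Matrix n n 𝕜}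
    (hM : ∀ i ∈ s, (M i).PosSemidef) {i : ι} (hi : i ∈ s) :
    LinearMap.range (M i).mulVecLin ≤ LinearMap.range (∑ j ∈ s, M j).mulVecLin := by
  classical
  rw [← Finset.add_sum_erase s M hi]
  exact (hM i hi).range_mulVecLin_le_add
    (posSemidef_sum _ fun j hj => hM j (Finset.mem_of_mem_erase hj))

theorem mem_range_mulVecLin_vecMulVec_self_star (z : n → 𝕜) :
    z ∈ LinearMap.range (vecMulVec z (star z)).mulVecLin := by
  by_cases hz : z = 0
  · simp [hz]
  have hzz : star z ⬝ᵥ z ≠ 0 := fun h => hz (dotProduct_star_self_eq_zero.mp h)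
  refine ⟨(star z ⬝ᵥ z)⁻¹ • z, ?_⟩
  rw [mulVecLin_apply, mulVec_smul, vecMulVec_mulVec, op_smul_eq_smul, smul_smul,
    inv_mul_cancel₀ hzz, one_smul]

end Matrix

theorem ptrans_sum {ι : Type*} (s : Finset ι) (X : ι → M9) :
    ptrans (∑ i ∈ s, X i) = ∑ i ∈ s, ptrans (X i) := by
  ext p q
  simp [ptrans, Matrix.sum_apply]

theorem mem_TFace_of_smul_add_mem {A X Y : M9} (hX : IsPPT X) (hY : IsPPT Y) {a b : ℝ}
    (ha : 0 < a) (hb : 0 ≤ b) (h : a • X + b • Y ∈ TFace A) : X ∈ TFace A :=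
  ⟨hX, (hX.1.range_mulVecLin_le_smul_add hY.1 ha hb).trans h.2.1,
    (hX.2.range_mulVecLin_le_smul_add hY.2 ha hb).trans h.2.2⟩

theorem isFaceOf_TFace (A : M9) : IsFaceOf (TFace A) Tcone := by
  refine ⟨fun B hB => hB.1, ?_, ?_⟩
  · intro X hX Y hY a b ha hb _
    exact ⟨⟨(hX.1.1.smul ha).add (hY.1.1.smul hb), (hX.1.2.smul ha).add (hY.1.2.smul hb)⟩,
      range_mulVecLin_smul_add_smul_le hX.2.1 hY.2.1 a b,
      range_mulVecLin_smul_add_smul_le hX.2.2 hY.2.2 a b⟩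
  · intro X hX Y hY t ht0 ht1 hXY
    have h1t : 0 < 1 - t := sub_pos.2 ht1
    exact ⟨mem_TFace_of_smul_add_mem hX hY h1t ht0.le hXY,
      mem_TFace_of_smul_add_mem hY hX ht0 h1t.le (add_comm ((1 - t) • X) (t • Y) ▸ hXY)⟩

theorem smul_rankOne_prodVec {c : ℝ} (hc : 0 ≤ c) (x y : Fin 3 → ℂ) :
    c • rankOne (prodVec x y) = rankOne (prodVec ((√c : ℂ) • x) y) := by
  have hsq : (√c : ℂ) * (starRingEnd ℂ) (√c : ℂ) = c := by
    rw [Complex.conj_ofReal, ← Complex.ofReal_mul, Real.mul_self_sqrt hc]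
  ext p q
  simp only [rankOne, prodVec, Matrix.smul_apply, vecMulVec_apply, Pi.smul_apply, smul_eq_mul,
    map_mul, Complex.real_smul]
  rw [← hsq]
  ring

def sepCone : PointedCone ℝ M9 where
  carrier := V1
  zero_mem' := ⟨0, ![], ![], by simp⟩
  add_mem' := by
    rintro _ _ ⟨n, x, y, rfl⟩ ⟨m, x', y', rfl⟩
    refine ⟨n + m, Fin.append x x', Fin.append y y', ?_⟩
    simp [Fin.sum_univ_add]
  smul_mem' := by
    rintro ⟨c, hc⟩ _ ⟨n, x, y, rfl⟩
    refine ⟨n, fun i => (√c : ℂ) • x i, y, ?_⟩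
    simp only [Nonneg.mk_smul, Finset.smul_sum, smul_rankOne_prodVec hc]

theorem rankOne_prodVec_mem_sepCone (x y : Fin 3 → ℂ) : rankOne (prodVec x y) ∈ sepCone :=
  ⟨1, ![x], ![y], by simp⟩

theorem prodVec_single_one (p : Idx) :
    prodVec (Pi.single p.1 1) (Pi.single p.2 1) = Pi.single p 1 := by
  ext r
  simp only [prodVec, Pi.single_apply, Prod.ext_iff]
  split_ifs <;> simp_all

theorem rankOne_single_one (p : Idx) : rankOne (Pi.single p 1) = single p p 1 := by
  rw [single_eq_single_vecMulVec_single, rankOne]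
  congr 1
  ext r
  simp [Pi.single_apply, apply_ite]

theorem diagonal_ofReal_mem_sepCone {d : Idx → ℝ} (hd : 0 ≤ d) :
    diagonal (fun p => (d p : ℂ)) ∈ sepCone := by
  rw [← sum_single_eq_diagonal]
  refine sum_mem fun p _ => ?_
  have hp : single p p (d p : ℂ) = d p • rankOne (prodVec (Pi.single p.1 1) (Pi.single p.2 1)) := by
    simp [prodVec_single_one, rankOne_single_one, smul_single]
  rw [hp]
  exact sepCone.smul_mem (hd p) (rankOne_prodVec_mem_sepCone _ _)

theorem ptrans_rankOne_prodVec (x y : Fin 3 → ℂ) :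
    ptrans (rankOne (prodVec x y)) = rankOne (prodVec (conjVec x) y) := by
  ext p q
  simp only [ptrans, rankOne, prodVec, conjVec, vecMulVec_apply, map_mul, Complex.conj_conj]
  ring

theorem V1_subset_Tcone : V1 ⊆ Tcone := by
  rintro _ ⟨n, x, y, rfl⟩
  refine ⟨posSemidef_sum _ fun i _ => posSemidef_vecMulVec_self_star _, ?_⟩
  rw [ptrans_sum]
  simp only [ptrans_rankOne_prodVec]
  exact posSemidef_sum _ fun i _ => posSemidef_vecMulVec_self_star _

theorem isFaceOf_V1_inter_TFace (A : M9) : IsFaceOf (V1 ∩ TFace A) V1 :=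
  (isFaceOf_TFace A).inter_of_subset sepCone.convex V1_subset_Tcone

def phase : Fin 4 → ℂ := ![1, Complex.I, -1, -Complex.I]

def phaseVec (jk : Fin 4 × Fin 4) : Fin 3 → ℂ := ![1, phase jk.1, phase jk.2]

def twirl (x y : Fin 3 → ℂ) : M9 :=
  ∑ jk : Fin 4 × Fin 4, rankOne (prodVec (phaseVec jk * x) (star (phaseVec jk) * y))

def phasePattern : M9 := of fun p q => if p = q ∨ (p.1 = p.2 ∧ q.1 = q.2) then 1 else 0

-- The sum vanishes unless the phase occurs as often unconjugated (`P₁`, `P₄`) as conjugated.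
theorem sum_phase_monomial (P₁ P₂ P₃ P₄ : Prop) [Decidable P₁] [Decidable P₂] [Decidable P₃]
    [Decidable P₄] :
    ∑ j : Fin 4, (if P₁ then phase j else 1) * star (if P₂ then phase j else 1) *
      star (if P₃ then phase j else 1) * (if P₄ then phase j else 1)
      = if (P₁ ∧ P₄ ↔ P₂ ∧ P₃) ∧ (P₁ ∨ P₄ ↔ P₂ ∨ P₃) then 4 else 0 := by
  by_cases h₁ : P₁ <;> by_cases h₂ : P₂ <;> by_cases h₃ : P₃ <;> by_cases h₄ : P₄ <;>
    simp [h₁, h₂, h₃, h₄, phase, Fin.sum_univ_four] <;> norm_num [Complex.ext_iff]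

theorem phaseVec_apply (jk : Fin 4 × Fin 4) (i : Fin 3) :
    phaseVec jk i = (if i = 1 then phase jk.1 else 1) * (if i = 2 then phase jk.2 else 1) := by
  fin_cases i <;> simp [phaseVec]

theorem phasePattern_iff (a b a' b' : Fin 3) :
    ((((a = 1 ∧ b' = 1) ↔ (b = 1 ∧ a' = 1)) ∧ ((a = 1 ∨ b' = 1) ↔ (b = 1 ∨ a' = 1))) ∧
      (((a = 2 ∧ b' = 2) ↔ (b = 2 ∧ a' = 2)) ∧ ((a = 2 ∨ b' = 2) ↔ (b = 2 ∨ a' = 2))))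
      ↔ ((a, b) = (a', b') ∨ (a = b ∧ a' = b')) := by
  revert a b a' b'
  decide

theorem sum_phaseVec_monomial (p q : Idx) :
    ∑ jk : Fin 4 × Fin 4, phaseVec jk p.1 * star (phaseVec jk p.2) * star (phaseVec jk q.1) *
      phaseVec jk q.2 = 16 * phasePattern p q := by
  obtain ⟨a, b⟩ := p
  obtain ⟨a', b'⟩ := q
  let S (r : Fin 3) (j : Fin 4) : ℂ := (if a = r then phase j else 1) *
    star (if b = r then phase j else 1) * star (if a' = r then phase j else 1) *
    (if b' = r then phase j else 1)
  calc _ = (∑ j, S 1 j) * (∑ k, S 2 k) := by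
        rw [Finset.sum_mul_sum, ← Finset.sum_product']
        refine Finset.sum_congr rfl fun jk _ => ?_
        simp only [S, phaseVec_apply, star_mul']
        ring
    _ = 16 * phasePattern (a, b) (a', b') := by
        simp only [S, sum_phase_monomial, phasePattern, of_apply, ← phasePattern_iff]
        split_ifs <;> simp_all
        norm_num

theorem twirl_eq (x y : Fin 3 → ℂ) :
    twirl x y = (16 : ℂ) • (rankOne (prodVec x y) ⊙ phasePattern) := by
  ext p q
  rw [Matrix.smul_apply, hadamard_apply, smul_eq_mul, mul_left_comm, ← sum_phaseVec_monomial,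
    twirl, Matrix.sum_apply, Finset.mul_sum]
  refine Finset.sum_congr rfl fun jk _ => ?_
  simp only [rankOne, prodVec, vecMulVec_apply, Pi.mul_apply, Pi.star_apply, map_mul,
    Complex.star_def, Complex.conj_conj]
  ring

theorem twirl_mem_sepCone (x y : Fin 3 → ℂ) : twirl x y ∈ sepCone :=
  sum_mem fun _ _ => rankOne_prodVec_mem_sepCone _ _

theorem twirl_sub_rankOne_mem_sepCone (x y : Fin 3 → ℂ) :
    twirl x y - rankOne (prodVec x y) ∈ sepCone := by
  have h₀ : phaseVec (0, 0) = 1 := by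
    ext i
    fin_cases i <;> rfl
  rw [twirl, ← Finset.add_sum_erase _ _ (Finset.mem_univ (0, 0)), h₀, star_one, one_mul, one_mul,
    add_sub_cancel_left]
  exact sum_mem fun _ _ => rankOne_prodVec_mem_sepCone _ _

theorem twirl_one : twirl 1 1 = (16 : ℝ) • Amat 1 1 1 := by
  ext p q
  simp only [twirl_eq, Matrix.smul_apply, hadamard_apply, phasePattern, of_apply, Amat, rankOne,
    prodVec, vecMulVec_apply, Pi.one_apply]
  split_ifs <;> simp_all

theorem Amat_one_one_one_mem_sepCone : Amat 1 1 1 ∈ sepCone := by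
  have h : Amat 1 1 1 = (1 / 16 : ℝ) • twirl 1 1 := by
    rw [twirl_one, smul_smul]
    norm_num
  rw [h]
  exact sepCone.smul_mem (by norm_num) (twirl_mem_sepCone 1 1)

def diagWeight (b c : ℝ) (p : Idx) : ℝ :=
  if p.1 = p.2 then 1 else if p.2 = p.1 + 1 then c else b

theorem Amat_eq_twirl_add (b c ε : ℝ) {x y : Fin 3 → ℂ} {δ : ℂ} (h : ∀ i, x i * y i = δ) :
    Amat 1 b c = ε • twirl x y + (1 - 16 * ε * Complex.normSq δ) • Amat 1 1 1 +
      diagonal (fun p => ((diagWeight b c p - (1 - 16 * ε * Complex.normSq δ)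
        - 16 * ε * Complex.normSq (prodVec x y p) : ℝ) : ℂ)) := by
  have hdiag : ∀ p : Idx, p.1 = p.2 → prodVec x y p = δ := by
    rintro ⟨i, j⟩ (rfl : i = j)
    exact h i
  ext p q
  simp only [twirl_eq, Matrix.add_apply, Matrix.smul_apply, hadamard_apply, phasePattern, of_apply,
    Amat, diagonal_apply, rankOne, vecMulVec_apply, diagWeight, Complex.real_smul, smul_eq_mul]
  rcases eq_or_ne p q with rfl | hpq
  · simp only [true_or, if_true, Complex.mul_conj]
    split_ifs <;> push_cast <;> ring
  · by_cases hd : p.1 = p.2 ∧ q.1 = q.2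
    · simp [hpq, hd, hdiag p hd.1, hdiag q hd.2, Complex.mul_conj]
      ring
    · simp [hpq, hd]

theorem exists_pos_forall_mul_le {ι : Type*} [Finite ι] (f : ι → ℝ) {m : ℝ} (hm : 0 < m) :
    ∃ ε > (0 : ℝ), ∀ i, ε * f i ≤ m := by
  obtain ⟨K, hK⟩ := Finite.exists_le f
  have hK1 : 0 < |K| + 1 := by positivity
  refine ⟨m / (|K| + 1), div_pos hm hK1, fun i => ?_⟩
  calc m / (|K| + 1) * f i ≤ m / (|K| + 1) * (|K| + 1) :=
        mul_le_mul_of_nonneg_left (by linarith [hK i, le_abs_self K]) (div_pos hm hK1).le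
    _ = m := div_mul_cancel₀ m hK1.ne'

theorem min_le_diagWeight_sub_one (b c : ℝ) {p : Idx} (hp : p.1 ≠ p.2) :
    min (b - 1) (c - 1) ≤ diagWeight b c p - 1 := by
  unfold diagWeight
  split_ifs with h₁
  · exact absurd h₁ hp
  · exact min_le_right _ _
  · exact min_le_left _ _

theorem exists_sub_smul_rankOne_mem_sepCone {b c : ℝ} (hb : 1 < b) (hc : 1 < c)
    {x y : Fin 3 → ℂ} {δ : ℂ} (h : ∀ i, x i * y i = δ) :
    ∃ ε > (0 : ℝ), Amat 1 b c - ε • rankOne (prodVec x y) ∈ sepCone := by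
  set z := prodVec x y
  have hzδ : ∀ i, z (i, i) = δ := h
  obtain ⟨ε, hε, hεz⟩ := exists_pos_forall_mul_le (fun p => 16 * Complex.normSq (z p))
    (lt_min (lt_min (sub_pos.2 hb) (sub_pos.2 hc)) one_pos)
  set η := 16 * ε * Complex.normSq δ
  have hη0 : 0 ≤ η := mul_nonneg (by linarith) (Complex.normSq_nonneg δ)
  have hη1 : η ≤ 1 := by
    have := hεz (0, 0)
    simp only [hzδ] at this
    linarith [min_le_right (min (b - 1) (c - 1)) 1]
  have hd : 0 ≤ fun p => diagWeight b c p - (1 - η) - 16 * ε * Complex.normSq (z p) := by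
    intro p
    show 0 ≤ diagWeight b c p - (1 - η) - 16 * ε * Complex.normSq (z p)
    by_cases hp : p.1 = p.2
    · obtain ⟨i, j⟩ := p
      simp only at hp
      subst hp
      simp [diagWeight, hzδ, η]
    · have := hεz p
      linarith [min_le_diagWeight_sub_one b c hp, min_le_left (min (b - 1) (c - 1)) 1]
  have hsplit : Amat 1 b c - ε • rankOne z = ε • (twirl x y - rankOne z) +
      ((1 - η) • Amat 1 1 1 + diagonal (fun p =>
        ((diagWeight b c p - (1 - η) - 16 * ε * Complex.normSq (z p) : ℝ) : ℂ))) := by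
    rw [Amat_eq_twirl_add b c ε h, smul_sub]
    abel
  refine ⟨ε, hε, ?_⟩
  rw [hsplit]
  exact add_mem (sepCone.smul_mem hε.le (twirl_sub_rankOne_mem_sepCone x y))
    (add_mem (sepCone.smul_mem (sub_nonneg.2 hη1) Amat_one_one_one_mem_sepCone)
      (diagonal_ofReal_mem_sepCone hd))

theorem Amat_mem_sepCone {b c : ℝ} (hb : 1 < b) (hc : 1 < c) : Amat 1 b c ∈ sepCone := by
  obtain ⟨ε, -, h⟩ := exists_sub_smul_rankOne_mem_sepCone hb hc (x := 0) (y := 0) (δ := 0)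
    fun _ => mul_zero _
  have h0 : rankOne (prodVec 0 0) = 0 := by
    ext
    simp [rankOne, prodVec, vecMulVec_apply]
  rwa [h0, smul_zero, sub_zero] at h

theorem Amat_one_apply_diag_row (b c : ℝ) (i : Fin 3) (q : Idx) :
    Amat 1 b c (i, i) q = if q.1 = q.2 then 1 else 0 := by
  obtain ⟨j, k⟩ := q
  unfold Amat
  split_ifs <;> simp_all
  grind

theorem Amat_mulVec_apply_diag (b c : ℝ) (u : V9) (i : Fin 3) :
    (Amat 1 b c *ᵥ u) (i, i) = ∑ j : Fin 3, u (j, j) := by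
  simp [mulVec, dotProduct, Amat_one_apply_diag_row, Fintype.sum_prod_type]

theorem apply_diag_eq_of_mem_range {b c : ℝ} {w : V9} (hw : w ∈ MatRange (Amat 1 b c))
    (i j : Fin 3) : w (i, i) = w (j, j) := by
  obtain ⟨u, rfl⟩ := hw
  simp only [mulVecLin_apply, Amat_mulVec_apply_diag]

theorem exists_sub_smul_mem_sepCone_of_range_le {b c : ℝ} (hb : 1 < b) (hc : 1 < c) {B : M9}
    (hB : B ∈ V1) (hBA : MatRange B ≤ MatRange (Amat 1 b c)) :
    ∃ s > (0 : ℝ), Amat 1 b c - s • B ∈ sepCone := by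
  obtain ⟨n, x, y, rfl⟩ := hB
  refine sepCone.exists_sub_smul_sum_mem (Amat_mem_sepCone hb hc) _ _ fun i _ => ?_
  have hz : prodVec (x i) (y i) ∈ MatRange (Amat 1 b c) :=
    hBA (range_mulVecLin_le_sum (fun j _ => posSemidef_vecMulVec_self_star _)
      (Finset.mem_univ i) (mem_range_mulVecLin_vecMulVec_self_star _))
  exact exists_sub_smul_rankOne_mem_sepCone hb hc fun k => apply_diag_eq_of_mem_range hz k 0

/-- for `b > 1` and `c > 1`, `V₁[A[1,b,c]] = V₁ ∩ 𝕋[A[1,b,c]]`. -/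
theorem stmt19 (b c : ℝ) (hb : 1 < b) (hc : 1 < c) :
    smallestFace V1 (Amat 1 b c) = V1 ∩ TFace (Amat 1 b c) := by
  have hA : Amat 1 b c ∈ V1 := Amat_mem_sepCone hb hc
  refine Set.Subset.antisymm (smallestFace_subset (isFaceOf_V1_inter_TFace _)
    ⟨hA, V1_subset_Tcone hA, le_rfl, le_rfl⟩) ?_
  rintro B ⟨hB, -, hBA, -⟩
  obtain ⟨s, hs, hAB⟩ := exists_sub_smul_mem_sepCone_of_range_le hb hc hB hBA
  exact Set.mem_sInter.2 fun F ⟨hF, hAF⟩ =>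
    IsFaceOf.mem_of_sub_smul_mem (C := sepCone) hF hAF hB hs hAB
end
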